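/- (Recursion for g_k.) Let k ≥ 3. For all x : Fin k → ZMod 12, one has g_k (x 0, x 1, …, x (k−1)) = ∑_{b ∈ {0,1,2,3}} g_{k−1} (x 0, x 1 + b·x 2, x 3, …, x (k−1)) + ∑_{a ∈ {0,2}} g_{k−1} (x 0, a·x 1 + x 2, x 3, …, x (k−1)) + ∑_{a ∈ {0,2}} ∑_{b ∈ {0,2}} g_{k−1} (x 0, a·x 1 + b·x 2, x 3, …, x (k−1)), where on the right g_{k−1} is applied to the (k−1)-tuple obtained from x by replacing the pair (x 1, x 2) by the single indicated entry. -/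

import Mathlib

open scoped Classical in
/-- The function `g_{k+1}`: it takes value `4` exactly when the first
coordinate is odd and all other coordinates lie in `C = {0,4,8}`. -/
noncomputable def gfun (k : ℕ) : (Fin (k + 1) → ZMod 12) → ZMod 12 := fun x =>
  if Odd (x 0) ∧ ∀ i, i ≠ 0 → x i ∈ ({0, 4, 8} : Set (ZMod 12)) then 4 else 0

/-- From a `(m+3)`-tuple `x`, the `(m+2)`-tuple obtained by replacing the pair
`(x 1, x 2)` by the single entry `u`. -/
def collapse (m : ℕ) (x : Fin (m + 3) → ZMod 12) (u : ZMod 12) :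
    Fin (m + 2) → ZMod 12 := fun i =>
  if (i : ℕ) = 0 then x 0 else if (i : ℕ) = 1 then u else x i.succ

/-! Write `ind4 p` for the `4`-valued indicator of `p`. Since `4 * 4 = 4` in `ZMod 12`, `ind4` is
multiplicative, so `g_k` factors as `ind4 (outer condition) * ind4 (x 1 ∈ C ∧ x 2 ∈ C)` and each
`g_{k-1}` on the right as the same outer factor times `ind4 (u ∈ C)`. The recursion thus reduces to
a two-variable identity between indicators of `C = {0, 4, 8}`, checked on all of `(ZMod 12)²`. -/

local notation "C" => ({0, 4, 8} : Set (ZMod 12))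

open scoped Classical in
noncomputable def ind4 (p : Prop) : ZMod 12 := if p then 4 else 0

theorem ind4_congr {p q : Prop} (h : p ↔ q) : ind4 p = ind4 q :=
  congrArg ind4 (propext h)

theorem ind4_and (p q : Prop) : ind4 (p ∧ q) = ind4 p * ind4 q := by
  by_cases hp : p <;> by_cases hq : q <;> simp [ind4, hp, hq]; decide

theorem ind4_mem_and_mem (u v : ZMod 12) :
    ind4 (u ∈ C ∧ v ∈ C) =
      (∑ b ∈ ({0, 1, 2, 3} : Finset (ZMod 12)), ind4 (u + b * v ∈ C)) +
      (∑ a ∈ ({0, 2} : Finset (ZMod 12)), ind4 (a * u + v ∈ C)) +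
      (∑ a ∈ ({0, 2} : Finset (ZMod 12)), ∑ b ∈ ({0, 2} : Finset (ZMod 12)),
        ind4 (a * u + b * v ∈ C)) := by
  simp only [ind4, Set.mem_insert_iff, Set.mem_singleton_iff]
  revert u v
  decide

theorem Fin.forall_ne_zero_iff {n : ℕ} {P : Fin (n + 1) → Prop} :
    (∀ i, i ≠ 0 → P i) ↔ ∀ i : Fin n, P i.succ := by
  simp [Fin.forall_fin_succ]

theorem gfun_eq_ind4 (k : ℕ) (y : Fin (k + 1) → ZMod 12) :
    gfun k y = ind4 (Odd (y 0) ∧ ∀ i : Fin k, y i.succ ∈ C) := by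
  unfold gfun ind4
  congr 1
  exact propext (and_congr_right' Fin.forall_ne_zero_iff)

section collapse

variable (m : ℕ) (x : Fin (m + 3) → ZMod 12) (u : ZMod 12)

theorem collapse_zero : collapse m x u 0 = x 0 := rfl

theorem collapse_one : collapse m x u 1 = u := by
  simp [collapse]

theorem collapse_succ_succ (j : Fin m) : collapse m x u j.succ.succ = x j.succ.succ.succ := by
  simp [collapse]

theorem gfun_collapse :
    gfun (m + 1) (collapse m x u) =
      ind4 (Odd (x 0) ∧ ∀ j : Fin m, x j.succ.succ.succ ∈ C) * ind4 (u ∈ C) := by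
  rw [gfun_eq_ind4, ← ind4_and]
  simp only [Fin.forall_fin_succ, Fin.succ_zero_eq_one, collapse_zero, collapse_one,
    collapse_succ_succ]
  exact ind4_congr (by tauto)

theorem gfun_succ_succ :
    gfun (m + 2) x =
      ind4 (Odd (x 0) ∧ ∀ j : Fin m, x j.succ.succ.succ ∈ C) * ind4 (x 1 ∈ C ∧ x 2 ∈ C) := by
  rw [gfun_eq_ind4, ← ind4_and]
  simp only [Fin.forall_fin_succ, Fin.succ_zero_eq_one, Fin.succ_one_eq_two]
  exact ind4_congr (by tauto)

end collapse

theorem stmt_8 (m : ℕ) (x : Fin (m + 3) → ZMod 12) :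
    gfun (m + 2) x =
      (∑ b ∈ ({0, 1, 2, 3} : Finset (ZMod 12)),
        gfun (m + 1) (collapse m x (x 1 + b * x 2))) +
      (∑ a ∈ ({0, 2} : Finset (ZMod 12)),
        gfun (m + 1) (collapse m x (a * x 1 + x 2))) +
      (∑ a ∈ ({0, 2} : Finset (ZMod 12)), ∑ b ∈ ({0, 2} : Finset (ZMod 12)),
        gfun (m + 1) (collapse m x (a * x 1 + b * x 2))) := by
  simp only [gfun_succ_succ, gfun_collapse, ← Finset.mul_sum, ← mul_add]
  rw [ind4_mem_and_mem]
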